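/- arXiv:2310.12247 — 4 statements merged into one kernel-verified Lean document; each statement's English description precedes it below -/
import Mathlib

section
/- Let φ : ℝⁿ → ℝ be convex and L-smooth, let ω : ℝⁿ → (-∞,∞] be proper closed convex, and let 0 < γ ≤ 1/L. Define q(y) = prox_{γω}[y - γ∇φ(y)]. Then for every x, y ∈ ℝⁿ: (φ + ω)(x) - (φ + ω)(q(y)) ≥ (1/γ)⟨x - q(y), y - q(y)⟩ - (1/(2γ))‖q(y) - y‖². -/
set_option maxHeartbeats 1000000


open scoped RealInnerProductSpace

/-- `ℝⁿ` as a Euclidean space. -/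
abbrev Eucl (n : ℕ) := EuclideanSpace ℝ (Fin n)

theorem aux_deriv {n : ℕ} (φ : Eucl n → ℝ) (φ' : Eucl n → Eucl n)
    (hφ' : ∀ x, HasGradientAt φ (φ' x) x) (y v : Eucl n) (t : ℝ) :
    HasDerivAt (fun s : ℝ => φ (y + s • v)) ⟪φ' (y + t • v), v⟫ t := by
  have hc : HasDerivAt (fun s : ℝ => y + s • v) v t := by
    simpa using ((hasDerivAt_id t).smul_const v).const_add y
  have h1 := (hφ' (y + t • v)).hasFDerivAt
  have := h1.comp_hasDerivAt t hc
  simp [InnerProductSpace.toDual_apply_apply] at this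
  exact this

/-- Descent lemma. -/
theorem aux_descent {n : ℕ} (φ : Eucl n → ℝ) (φ' : Eucl n → Eucl n) (L : ℝ)
    (hφ' : ∀ x, HasGradientAt φ (φ' x) x)
    (hL : ∀ x y, ‖φ' x - φ' y‖ ≤ L * ‖x - y‖) (y b : Eucl n) :
    φ b ≤ φ y + ⟪φ' y, b - y⟫ + L / 2 * ‖b - y‖ ^ 2 := by
  set v := b - y with hv
  set h : ℝ → ℝ := fun t => φ (y + t • v) - t * ⟪φ' y, v⟫ - L * ‖v‖ ^ 2 * t ^ 2 / 2 with hh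
  have hd : ∀ t : ℝ, HasDerivAt h (⟪φ' (y + t • v), v⟫ - ⟪φ' y, v⟫ - L * ‖v‖ ^ 2 * t) t := by
    intro t
    have h1 := aux_deriv φ φ' hφ' y v t
    have h2 : HasDerivAt (fun s : ℝ => s * ⟪φ' y, v⟫) ⟪φ' y, v⟫ t := by
      simpa using (hasDerivAt_id t).mul_const ⟪φ' y, v⟫
    have h3 : HasDerivAt (fun s : ℝ => L * ‖v‖ ^ 2 * s ^ 2 / 2) (L * ‖v‖ ^ 2 * t) t := by
      have := ((hasDerivAt_pow 2 t).const_mul (L * ‖v‖ ^ 2)).div_const 2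
      rw [show L * ‖v‖ ^ 2 * t = L * ‖v‖ ^ 2 * (((2:ℕ):ℝ) * t ^ (2 - 1)) / 2 by push_cast; ring]
      exact this
    exact (h1.sub h2).sub h3
  have hanti : AntitoneOn h (Set.Icc 0 1) := by
    apply antitoneOn_of_deriv_nonpos (convex_Icc 0 1)
    · exact fun t _ => ((hd t).continuousAt).continuousWithinAt
    · exact fun t _ => ((hd t).differentiableAt).differentiableWithinAt
    · intro t ht
      rw [interior_Icc] at ht
      rw [(hd t).deriv]
      have hcs : ⟪φ' (y + t • v) - φ' y, v⟫ ≤ ‖φ' (y + t • v) - φ' y‖ * ‖v‖ :=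
        real_inner_le_norm _ _
      have hlip : ‖φ' (y + t • v) - φ' y‖ ≤ L * (t * ‖v‖) := by
        have := hL (y + t • v) y
        simpa [norm_smul, abs_of_pos ht.1, mul_assoc] using this
      have hsub : ⟪φ' (y + t • v), v⟫ - ⟪φ' y, v⟫ = ⟪φ' (y + t • v) - φ' y, v⟫ := by
        rw [inner_sub_left]
      rw [hsub]
      have hvn : (0:ℝ) ≤ ‖v‖ := norm_nonneg _
      nlinarith [mul_le_mul_of_nonneg_right hlip hvn, hcs]
  have h10 : h 1 ≤ h 0 := hanti (Set.mem_Icc.mpr ⟨le_refl 0, zero_le_one⟩)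
    (Set.mem_Icc.mpr ⟨zero_le_one, le_refl 1⟩) zero_le_one
  simp only [hh, one_smul, zero_smul, add_zero, one_pow, one_mul, zero_mul, mul_zero] at h10
  have hb' : y + v = b := by rw [hv]; abel
  rw [hb'] at h10
  nlinarith [h10]

/-- The fundamental proximal-gradient descent inequality: for `φ` convex
`L`-smooth, `ω` proper closed convex, `0 < γ ≤ 1/L`, and
`q(y) = prox_{γω}[y - γ∇φ(y)]`, one has for all `x, y`:
`(φ+ω)(x) - (φ+ω)(q(y)) ≥ (1/γ)⟨x - q(y), y - q(y)⟩ - (1/(2γ))‖q(y) - y‖²`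
(stated in the equivalent rearranged form to avoid `∞ - ∞`). -/
theorem prox_gradient_descent_ineq {n : ℕ} (φ : Eucl n → ℝ) (φ' : Eucl n → Eucl n)
    (L : ℝ)
    (hφconv : ConvexOn ℝ Set.univ φ)
    (hφ' : ∀ x, HasGradientAt φ (φ' x) x)
    (hL : ∀ x y, ‖φ' x - φ' y‖ ≤ L * ‖x - y‖)
    (ω : Eucl n → EReal)
    (hω_ne_bot : ∀ x, ω x ≠ ⊥) (hω_ne_top : ∃ x, ω x ≠ ⊤)
    (hωclosed : LowerSemicontinuous ω)
    (hωconvex : ∀ x y : Eucl n, ∀ a b : ℝ, 0 ≤ a → 0 ≤ b → a + b = 1 →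
      ω (a • x + b • y) ≤ (a : EReal) * ω x + (b : EReal) * ω y)
    (γ : ℝ) (hγ : 0 < γ) (hγle : γ ≤ 1 / L)
    (q : Eucl n → Eucl n)
    (hq : ∀ y v : Eucl n,
      (γ : EReal) * ω (q y) + ((‖q y - (y - γ • φ' y)‖ ^ 2 / 2 : ℝ) : EReal)
        ≤ (γ : EReal) * ω v + ((‖v - (y - γ • φ' y)‖ ^ 2 / 2 : ℝ) : EReal)) :
    ∀ x y : Eucl n,
      ((φ (q y) : ℝ) : EReal) + ω (q y)
          + (((1 / γ) * ⟪x - q y, y - q y⟫ - (1 / (2 * γ)) * ‖q y - y‖ ^ 2 : ℝ) : EReal)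
        ≤ ((φ x : ℝ) : EReal) + ω x := by
  intro x y
  have hLpos : 0 < L := by
    by_contra h
    push_neg at h
    have : 1 / L ≤ 0 := div_nonpos_of_nonneg_of_nonpos zero_le_one h
    linarith
  have hγL : γ * L ≤ 1 := by
    rw [le_div_iff₀ hLpos] at hγle; linarith
  set q0 := q y with hq0def
  set u := y - γ • φ' y with hu
  obtain ⟨x₀, hx₀top⟩ := hω_ne_top
  have hx₀bot := hω_ne_bot x₀
  have hωq_ne_top : ω q0 ≠ ⊤ := by
    intro htop
    have h := hq y x₀
    rw [← hq0def, ← hu] at h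
    rw [htop, ← EReal.coe_toReal hx₀top hx₀bot, EReal.coe_mul_top_of_pos hγ,
      EReal.top_add_coe] at h
    have h2 : ((γ * (ω x₀).toReal + ‖x₀ - u‖ ^ 2 / 2 : ℝ) : EReal) = ⊤ := by
      rw [top_le_iff] at h
      rw [← h]
      push_cast
      ring_nf
    exact EReal.coe_ne_top _ h2
  by_cases hx_top : ω x = ⊤
  · rw [hx_top, EReal.coe_add_top]
    exact le_top
  set wq := (ω q0).toReal with hwqdef
  set wx := (ω x).toReal with hwxdef
  have hwq : ω q0 = (wq : EReal) := (EReal.coe_toReal hωq_ne_top (hω_ne_bot q0)).symm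
  have hwx : ω x = (wx : EReal) := (EReal.coe_toReal hx_top (hω_ne_bot x)).symm
  rw [hwq, hwx]
  norm_cast
  -- now a real inequality
  have hN : (0:ℝ) ≤ ‖q0 - y‖ ^ 2 := by positivity
  have hD : φ q0 ≤ φ y + ⟪φ' y, q0 - y⟫ + L / 2 * ‖q0 - y‖ ^ 2 :=
    aux_descent φ φ' L hφ' hL y q0
  -- convexity gradient inequality
  have hC : ⟪φ' y, x - y⟫ ≤ φ x - φ y := by
    have hg := aux_deriv φ φ' hφ' y (x - y) 0
    simp only [zero_smul, add_zero] at hg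
    have ht : Filter.Tendsto (slope (fun s : ℝ => φ (y + s • (x - y))) 0)
        (nhdsWithin 0 {(0:ℝ)}ᶜ) (nhds ⟪φ' y, x - y⟫) :=
      hasDerivAt_iff_tendsto_slope.mp hg
    have ht' : Filter.Tendsto (slope (fun s : ℝ => φ (y + s • (x - y))) 0)
        (nhdsWithin 0 (Set.Ioi (0:ℝ))) (nhds ⟪φ' y, x - y⟫) :=
      ht.mono_left (nhdsWithin_mono _ (fun z hz => ne_of_gt hz))
    refine le_of_tendsto ht' ?_
    filter_upwards [Ioc_mem_nhdsGT_of_mem ⟨le_refl 0, zero_lt_one⟩] with t htt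
    obtain ⟨ht0, ht1⟩ := htt
    have hvc : (1 - t) • y + t • x = y + t • (x - y) := by
      rw [sub_smul, one_smul, smul_sub]; abel
    have hconv := hφconv.2 (Set.mem_univ y) (Set.mem_univ x)
      (show (0:ℝ) ≤ 1 - t by linarith) (le_of_lt ht0) (show (1:ℝ) - t + t = 1 by ring)
    rw [hvc] at hconv
    simp only [smul_eq_mul] at hconv
    rw [slope_def_field, sub_zero, div_le_iff₀ ht0]
    simp only [zero_smul, add_zero]
    nlinarith [hconv]
  -- subgradient inequality
  have key : ∀ t ∈ Set.Ioc (0:ℝ) 1,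
      0 ≤ γ * (wx - wq) + ⟪q0 - u, x - q0⟫ + t * (‖x - q0‖ ^ 2 / 2) := by
    intro t htt
    obtain ⟨ht0, ht1⟩ := htt
    set v := q0 + t • (x - q0) with hv
    have hvc : (1 - t) • q0 + t • x = v := by
      rw [hv, sub_smul, one_smul, smul_sub]; abel
    have hconv := hωconvex q0 x (1 - t) t (by linarith) ht0.le (by ring)
    rw [hvc, hwq, hwx] at hconv
    have hconv' : ω v ≤ (((1 - t) * wq + t * wx : ℝ) : EReal) := by
      refine hconv.trans_eq ?_
      push_cast
      rfl
    have hv_ne_top : ω v ≠ ⊤ := by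
      intro h
      rw [h] at hconv'
      exact (EReal.coe_lt_top _).not_ge hconv'
    have hs : ω v = (((ω v).toReal : ℝ) : EReal) := (EReal.coe_toReal hv_ne_top (hω_ne_bot v)).symm
    set s := (ω v).toReal with hsdef
    have hsle : s ≤ (1 - t) * wq + t * wx := by
      rw [hs] at hconv'; exact_mod_cast hconv'
    have hqt := hq y v
    rw [← hq0def, ← hu, hwq, hs] at hqt
    rw [← EReal.coe_mul, ← EReal.coe_mul, ← EReal.coe_add, ← EReal.coe_add,
      EReal.coe_le_coe_iff] at hqt
    have hqt' : γ * wq + ‖q0 - u‖ ^ 2 / 2 ≤ γ * s + ‖v - u‖ ^ 2 / 2 := hqt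
    have hvu : v - u = (q0 - u) + t • (x - q0) := by rw [hv]; abel
    have hexp : ‖v - u‖ ^ 2
        = ‖q0 - u‖ ^ 2 + 2 * (t * ⟪q0 - u, x - q0⟫) + t ^ 2 * ‖x - q0‖ ^ 2 := by
      rw [hvu, norm_add_sq_real, real_inner_smul_right, norm_smul, Real.norm_eq_abs,
        abs_of_pos ht0]
      ring
    rw [hexp] at hqt'
    have h6 : γ * ((1 - t) * wq + t * wx) ≥ γ * s := mul_le_mul_of_nonneg_left hsle hγ.le
    have h7 : 0 ≤ t * (γ * (wx - wq) + ⟪q0 - u, x - q0⟫ + t * (‖x - q0‖ ^ 2 / 2)) := by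
      nlinarith [hqt', h6]
    by_contra hneg
    push_neg at hneg
    nlinarith [mul_pos ht0 (neg_pos.mpr hneg), h7]
  have hA : 0 ≤ γ * (wx - wq) + ⟪q0 - u, x - q0⟫ := by
    have hcont : Continuous (fun t : ℝ =>
        γ * (wx - wq) + ⟪q0 - u, x - q0⟫ + t * (‖x - q0‖ ^ 2 / 2)) := by fun_prop
    have h0 := hcont.tendsto 0
    simp only [zero_mul, add_zero] at h0
    have htend := h0.mono_left (nhdsWithin_le_nhds (s := Set.Ioi (0:ℝ)))
    refine ge_of_tendsto htend ?_
    filter_upwards [Ioc_mem_nhdsGT_of_mem ⟨le_refl 0, zero_lt_one⟩] with t htt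
    exact key t htt
  -- inner product algebra
  have hqu : q0 - u = (q0 - y) + γ • φ' y := by rw [hu]; abel
  have hxq : (x - q0 : Eucl n) = (x - y) - (q0 - y) := by abel
  have hP : ⟪q0 - u, x - q0⟫
      = ⟪q0 - y, x - q0⟫ + γ * (⟪φ' y, x - y⟫ - ⟪φ' y, q0 - y⟫) := by
    rw [hqu, inner_add_left, real_inner_smul_left]
    congr 1
    congr 1
    rw [hxq, inner_sub_right]
  rw [hP] at hA
  have hIxy : ⟪x - q0, y - q0⟫ = -⟪q0 - y, x - q0⟫ := by
    have hneg : (y - q0 : Eucl n) = -(q0 - y) := by abel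
    rw [real_inner_comm, hneg, inner_neg_left]
  rw [hIxy]
  have h3 : wq - wx - ⟪φ' y, x - y⟫ + ⟪φ' y, q0 - y⟫ ≤ ⟪q0 - y, x - q0⟫ / γ := by
    rw [le_div_iff₀ hγ]
    nlinarith [hA]
  have h4 : L / 2 * ‖q0 - y‖ ^ 2 ≤ ‖q0 - y‖ ^ 2 / (2 * γ) := by
    rw [le_div_iff₀ (by positivity)]
    nlinarith [mul_le_mul_of_nonneg_right hγL hN]
  have e1 : 1 / γ * (-⟪q0 - y, x - q0⟫) = -(⟪q0 - y, x - q0⟫ / γ) := by ring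
  have e2 : 1 / (2 * γ) * ‖q0 - y‖ ^ 2 = ‖q0 - y‖ ^ 2 / (2 * γ) := by ring
  rw [e1, e2]
  linarith [hD, hC, h3, h4]
end

section
/- Let f, h be convex and L_f-, L_h-smooth respectively, ω proper closed convex, and let x* solve the bilevel problem min f over X*_h̄ = argmin(h+ω), with optimal value f*. Suppose the R-APM iterates with parameters η > 0 and γ = 1/(L_h + ηL_f) satisfy F_η(x_K) - F_η(Π_{X*}(x_0)) ≤ 2(L_h + ηL_f) dist²(x_0, X*)/(K+1)², where X* is the bilevel optimal solution set and F_η = h + ηf + ω. If X*_h̄ is α-weakly sharp (i.e., (h+ω)(x) - min(h+ω) ≥ α·dist(x, X*_h̄) for all x) and η ≤ α/(2‖∇f(x*)‖), then (h+ω)(x_K) - min(h+ω) ≤ 4(L_h + ηL_f) dist²(x_0, X*)/(K+1)². -/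
open scoped RealInnerProductSpace

lemma ereal_add_eq (a : ℝ) (x : EReal) (b : ℝ) (hx : x ≠ ⊥) (h : (a:EReal) + x = (b:EReal)) :
    x = ((b - a : ℝ) : EReal) := by
  induction x with
  | bot => simp at hx
  | coe r => norm_cast at h ⊢; linarith
  | top => simp at h

lemma deriv_le_of_slope (g : ℝ → ℝ) (g' c : ℝ) (hg : HasDerivAt g g' 0)
    (hs : ∀ t ∈ Set.Ioc (0:ℝ) 1, (g t - g 0)/t ≤ c) : g' ≤ c := by
  have hd := (hg.hasDerivWithinAt (s := Set.Ioi (0:ℝ)))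
  rw [hasDerivWithinAt_iff_tendsto_slope] at hd
  have hset : Set.Ioi (0:ℝ) \ {0} = Set.Ioi 0 := by
    ext t
    simp only [Set.mem_diff, Set.mem_Ioi, Set.mem_singleton_iff]
    exact ⟨fun h => h.1, fun h => ⟨h, ne_of_gt h⟩⟩
  rw [hset] at hd
  refine le_of_tendsto hd ?_
  have hmem : Set.Ioc (0:ℝ) 1 ∈ nhdsWithin (0:ℝ) (Set.Ioi 0) :=
    Ioc_mem_nhdsGT_of_mem ⟨le_refl _, zero_lt_one⟩
  filter_upwards [hmem] with t ht
  have hsl : slope g 0 t = (g t - g 0)/t := by simp [slope_def_field]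
  rw [hsl]; exact hs t ht

lemma deriv_ge_of_slope (g : ℝ → ℝ) (g' c : ℝ) (hg : HasDerivAt g g' 0)
    (hs : ∀ t ∈ Set.Ioc (0:ℝ) 1, c ≤ (g t - g 0)/t) : c ≤ g' := by
  have key := deriv_le_of_slope (fun t => -g t) (-g') (-c) hg.neg ?_
  · linarith
  · intro t ht
    have h1 := hs t ht
    have ht0 : (0:ℝ) < t := ht.1
    rw [le_div_iff₀ ht0] at h1
    rw [div_le_iff₀ ht0]
    nlinarith

lemma line_deriv {E : Type*} [NormedAddCommGroup E] [InnerProductSpace ℝ E] [CompleteSpace E]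
    (f : E → ℝ) (g x d : E) (hf : HasGradientAt f g x) :
    HasDerivAt (fun t : ℝ => f (x + t • d)) ⟪g, d⟫ 0 := by
  have hline : HasDerivAt (fun t : ℝ => x + t • d) d 0 := by
    simpa using ((hasDerivAt_id (0:ℝ)).smul_const d).const_add x
  have hf' : HasFDerivAt f ((InnerProductSpace.toDual ℝ E) g) (x + (0:ℝ) • d) := by
    simpa using hasGradientAt_iff_hasFDerivAt.mp hf
  have := hf'.comp_hasDerivAt 0 hline
  exact this

/-- Theorem 1(ii) (infeasibility bound): under the R-APM rate bound
`F_η(x_K) - F_η(Π_{X*}(x_0)) ≤ 2(L_h+ηL_f) dist²(x_0,X*)/(K+1)²`, if the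
lower-level solution set `X*_h̄ = argmin (h+ω)` is `α`-weakly sharp and
`η ≤ α/(2‖∇f(x*)‖)`, then
`(h+ω)(x_K) - min (h+ω) ≤ 4(L_h+ηL_f) dist²(x_0,X*)/(K+1)²`. -/
theorem infeasibility_bound {n : ℕ} (f h : Eucl n → ℝ)
    (L_f L_h : ℝ)
    (hfconv : ConvexOn ℝ Set.univ f) (hhconv : ConvexOn ℝ Set.univ h)
    (ω : Eucl n → EReal)
    (hω_ne_bot : ∀ x, ω x ≠ ⊥) (hω_ne_top : ∃ x, ω x ≠ ⊤)
    (hωclosed : LowerSemicontinuous ω)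
    (hωconvex : ∀ x y : Eucl n, ∀ a b : ℝ, 0 ≤ a → 0 ≤ b → a + b = 1 →
      ω (a • x + b • y) ≤ (a : EReal) * ω x + (b : EReal) * ω y)
    -- the lower-level solution set `S = X*_h̄ = argmin (h + ω)` with minimum value `m`
    (S : Set (Eucl n)) (hSne : S.Nonempty) (hScl : IsClosed S) (hScv : Convex ℝ S)
    (hS : S = {z | ∀ w : Eucl n, ((h z : ℝ) : EReal) + ω z ≤ ((h w : ℝ) : EReal) + ω w})
    (m : ℝ) (hm : ∀ z ∈ S, ((h z : ℝ) : EReal) + ω z = (m : EReal))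
    -- the bilevel optimal solution set `X*` and an optimal solution `x*`
    (Xstar : Set (Eucl n)) (hXne : Xstar.Nonempty) (hXcl : IsClosed Xstar)
    (hXcv : Convex ℝ Xstar)
    (hXdef : Xstar = {z | z ∈ S ∧ ∀ w ∈ S, f z ≤ f w})
    (xstar : Eucl n) (hxstar : xstar ∈ Xstar)
    (gstar : Eucl n) (hgrad : HasGradientAt f gstar xstar)
    -- weak sharpness of `S` with parameter `α`, and the choice of `η`
    (α : ℝ) (hα : 0 < α)
    (hsharp : ∀ x : Eucl n,
      (m : EReal) + ((α * Metric.infDist x S : ℝ) : EReal) ≤ ((h x : ℝ) : EReal) + ω x)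
    (η : ℝ) (hη : 0 < η) (hηle : η ≤ α / (2 * ‖gstar‖))
    -- the projection `x̂ = Π_{X*}(x_0)` and the R-APM rate bound at `x̂`
    (x0 : Eucl n) (xhat : Eucl n)
    (hxhat : xhat ∈ Xstar ∧ ∀ z ∈ Xstar, ‖x0 - xhat‖ ≤ ‖x0 - z‖)
    (K : ℕ) (hK : 1 ≤ K) (xK : Eucl n)
    (hrate : ((h xK + η * f xK : ℝ) : EReal) + ω xK
        ≤ ((h xhat + η * f xhat : ℝ) : EReal) + ω xhat
            + ((2 * (L_h + η * L_f) * (Metric.infDist x0 Xstar) ^ 2 / ((K : ℝ) + 1) ^ 2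
                : ℝ) : EReal)) :
    ((h xK : ℝ) : EReal) + ω xK
      ≤ (m : EReal)
          + ((4 * (L_h + η * L_f) * (Metric.infDist x0 Xstar) ^ 2 / ((K : ℝ) + 1) ^ 2
              : ℝ) : EReal) := by
  -- basic memberships
  have hxstarP : xstar ∈ S ∧ ∀ w ∈ S, f xstar ≤ f w := by
    have := hxstar; rw [hXdef] at this; exact this
  have hxhatP : xhat ∈ S ∧ ∀ w ∈ S, f xhat ≤ f w := by
    have := hxhat.1; rw [hXdef] at this; exact this
  have hfeq : f xhat = f xstar :=
    le_antisymm (hxhatP.2 _ hxstarP.1) (hxstarP.2 _ hxhatP.1)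
  -- `ω xhat` is real
  have hωhat : ω xhat = ((m - h xhat : ℝ) : EReal) :=
    ereal_add_eq _ _ _ (hω_ne_bot xhat) (hm xhat hxhatP.1)
  set C : ℝ := 2 * (L_h + η * L_f) * (Metric.infDist x0 Xstar) ^ 2 / ((K : ℝ) + 1) ^ 2 with hC
  rw [hωhat] at hrate
  -- `ω xK` is real
  have hωKtop : ω xK ≠ ⊤ := by
    intro htop
    rw [htop] at hrate
    have hLHS : ((h xK + η * f xK : ℝ) : EReal) + (⊤:EReal) = ⊤ := by
      exact EReal.coe_add_top _
    rw [hLHS, top_le_iff] at hrate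
    rw [← EReal.coe_add, ← EReal.coe_add] at hrate
    exact EReal.coe_ne_top _ hrate
  obtain ⟨rK, hrK⟩ : ∃ r : ℝ, ω xK = (r : EReal) :=
    ⟨(ω xK).toReal, (EReal.coe_toReal hωKtop (hω_ne_bot xK)).symm⟩
  rw [hrK] at hrate
  rw [← EReal.coe_add, ← EReal.coe_add, ← EReal.coe_add, EReal.coe_le_coe_iff] at hrate
  -- weak sharpness as a real inequality
  have hsh := hsharp xK
  rw [hrK, ← EReal.coe_add, ← EReal.coe_add, EReal.coe_le_coe_iff] at hsh
  -- projection of xK onto S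
  obtain ⟨y, hyS, hy⟩ := hScl.exists_infDist_eq_dist hSne xK
  set dK : ℝ := Metric.infDist xK S with hdK
  -- gradient inequality (convexity): ⟪g, xK - x*⟫ ≤ f xK - f x*
  have hCineq : ⟪gstar, xK - xstar⟫ ≤ f xK - f xstar := by
    apply deriv_le_of_slope _ _ _ (line_deriv f gstar xstar (xK - xstar) hgrad)
    intro t ht
    have hpt : xstar + t • (xK - xstar) = (1-t) • xstar + t • xK := by module
    have hconv := hfconv.2 (Set.mem_univ xstar) (Set.mem_univ xK)
      (by linarith [ht.2] : (0:ℝ) ≤ 1 - t) (le_of_lt ht.1) (by ring)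
    rw [← hpt] at hconv
    rw [div_le_iff₀ ht.1]
    simp only [zero_smul, add_zero]
    simp only [smul_eq_mul] at hconv
    nlinarith [hconv]
  -- first-order optimality of x* over S: ⟪g, z - x*⟫ ≥ 0 for z ∈ S
  have hB : (0:ℝ) ≤ ⟪gstar, y - xstar⟫ := by
    apply deriv_ge_of_slope _ _ _ (line_deriv f gstar xstar (y - xstar) hgrad)
    intro t ht
    have hpt : xstar + t • (y - xstar) = (1-t) • xstar + t • y := by module
    have hmem : (1-t) • xstar + t • y ∈ S :=
      hScv hxstarP.1 hyS (by linarith [ht.2]) (le_of_lt ht.1) (by ring)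
    have hmin := hxstarP.2 _ hmem
    rw [hpt]
    simp only [zero_smul, add_zero]
    exact div_nonneg (by linarith) (le_of_lt ht.1)
  -- Cauchy–Schwarz piece
  have hnorm : ‖y - xK‖ = dK := by rw [hy, dist_eq_norm, norm_sub_rev]
  have hCS : ⟪gstar, y - xK⟫ ≤ ‖gstar‖ * dK := by
    calc ⟪gstar, y - xK⟫ ≤ ‖gstar‖ * ‖y - xK‖ := real_inner_le_norm _ _
      _ = ‖gstar‖ * dK := by rw [hnorm]
  have hsplit : ⟪gstar, xstar - xK⟫ = -⟪gstar, y - xstar⟫ + ⟪gstar, y - xK⟫ := by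
    rw [← inner_neg_right, ← inner_add_right]
    congr 1
    module
  have hneg : ⟪gstar, xstar - xK⟫ = -⟪gstar, xK - xstar⟫ := by
    rw [← inner_neg_right]; congr 1; module
  have hkey : f xstar - f xK ≤ ‖gstar‖ * dK := by
    have : f xstar - f xK ≤ ⟪gstar, xstar - xK⟫ := by linarith [hCineq, hneg.symm.le, hneg.le]
    calc f xstar - f xK ≤ ⟪gstar, xstar - xK⟫ := this
      _ = -⟪gstar, y - xstar⟫ + ⟪gstar, y - xK⟫ := hsplit
      _ ≤ ⟪gstar, y - xK⟫ := by linarith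
      _ ≤ ‖gstar‖ * dK := hCS
  -- η ‖g*‖ ≤ α/2
  have hg0 : 0 < ‖gstar‖ := by
    rcases eq_or_lt_of_le (norm_nonneg gstar) with hz | hz
    · exfalso; rw [← hz] at hηle; simp at hηle; linarith
    · exact hz
  have hηg : η * ‖gstar‖ ≤ α / 2 := by
    rw [le_div_iff₀ (by positivity : (0:ℝ) < 2 * ‖gstar‖)] at hηle
    nlinarith
  have hdK0 : 0 ≤ dK := Metric.infDist_nonneg
  -- put it together
  have hfinal : h xK + rK
      ≤ m + 4 * (L_h + η * L_f) * (Metric.infDist x0 Xstar) ^ 2 / ((K : ℝ) + 1) ^ 2 := by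
    have h1 : η * (f xstar - f xK) ≤ η * (‖gstar‖ * dK) :=
      mul_le_mul_of_nonneg_left hkey (le_of_lt hη)
    have h2 : η * (‖gstar‖ * dK) ≤ (α / 2) * dK := by
      rw [← mul_assoc]; exact mul_le_mul_of_nonneg_right hηg hdK0
    have hfeq' : η * f xhat = η * f xstar := by rw [hfeq]
    have h2C : 2 * C
        = 4 * (L_h + η * L_f) * (Metric.infDist x0 Xstar) ^ 2 / ((K : ℝ) + 1) ^ 2 := by
      rw [hC]; ring
    linarith [hrate, hsh, h1, h2, hfeq', h2C]
  rw [hrK, ← EReal.coe_add, ← EReal.coe_add, EReal.coe_le_coe_iff]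
  linarith [hfinal]
end

section
/- Suppose the R-APM iterates with η = 1/(K+1) satisfy F_η(x_K) - F_η(x) ≤ 2(L_h + ηL_f)‖x_0 - x‖²/(K+1)² for all x, where F_η = h̄ + ηf and h̄ = h + ω. Let x̂ = Π_{X*_h̄}(x_0) and D_f ≥ f(x̂) - f(x_K). Then h̄(x_K) - inf h̄ ≤ 2L_f dist²(x_0, X*_h̄)/(K+1)³ + 2L_h dist²(x_0, X*_h̄)/(K+1)² + D_f/(K+1). -/
/-- Proposition 1(ii) (infeasibility without weak sharpness): if the R-APM
iterate with `η = 1/(K+1)` satisfies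
`F_η(x_K) - F_η(x) ≤ 2(L_h + ηL_f)‖x_0 - x‖²/(K+1)²` for all `x`, where
`F_η = h̄ + ηf`, `h̄ = h + ω`, `x̂ = Π_{X*_h̄}(x_0)` and `D_f ≥ f(x̂) - f(x_K)`,
then `h̄(x_K) - inf h̄ ≤ 2L_f dist²(x_0,X*_h̄)/(K+1)³ +
2L_h dist²(x_0,X*_h̄)/(K+1)² + D_f/(K+1)`. -/
theorem prop1_infeasibility {n : ℕ} (f : Eucl n → ℝ) (hbar : Eucl n → EReal)
    (L_f L_h : ℝ) (hLf : 0 ≤ L_f) (hLh : 0 ≤ L_h)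
    (S : Set (Eucl n)) (hSne : S.Nonempty) (hScl : IsClosed S) (hScv : Convex ℝ S)
    (hS : S = {z | ∀ w : Eucl n, hbar z ≤ hbar w})
    (m : ℝ) (hm : ∀ z ∈ S, hbar z = (m : EReal))
    (K : ℕ) (hK : 1 ≤ K) (η : ℝ) (hη : η = 1 / ((K : ℝ) + 1))
    (x0 : Eucl n) (xhat : Eucl n)
    (hxhat : xhat ∈ S ∧ ∀ z ∈ S, ‖x0 - xhat‖ ≤ ‖x0 - z‖)
    (xK : Eucl n)
    (Df : ℝ) (hDf : f xhat - f xK ≤ Df)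
    (hrate : ∀ x : Eucl n,
      hbar xK + ((η * f xK : ℝ) : EReal)
        ≤ hbar x + ((η * f x : ℝ) : EReal)
            + ((2 * (L_h + η * L_f) * ‖x0 - x‖ ^ 2 / ((K : ℝ) + 1) ^ 2 : ℝ) : EReal)) :
    hbar xK
      ≤ (m : EReal)
          + ((2 * L_f * (Metric.infDist x0 S) ^ 2 / ((K : ℝ) + 1) ^ 3
              + 2 * L_h * (Metric.infDist x0 S) ^ 2 / ((K : ℝ) + 1) ^ 2
              + Df / ((K : ℝ) + 1) : ℝ) : EReal) := by
  obtain ⟨hxS, hxmin⟩ := hxhat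
  have hd : Metric.infDist x0 S = ‖x0 - xhat‖ := by
    refine le_antisymm ?_ ?_
    · simpa [dist_eq_norm] using Metric.infDist_le_dist_of_mem (x := x0) hxS
    · by_contra hlt
      push_neg at hlt
      obtain ⟨y, hyS, hy⟩ := (Metric.infDist_lt_iff hSne).1 hlt
      rw [dist_eq_norm] at hy
      exact absurd (hxmin y hyS) (by linarith)
  have hc : (0:ℝ) < (K : ℝ) + 1 := by positivity
  have hη0 : 0 < η := by rw [hη]; positivity
  have h1 := hrate xhat
  rw [hm xhat hxS] at h1
  have h1' : hbar xK + ((η * f xK : ℝ) : EReal)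
      ≤ ((m + η * f xhat + 2 * (L_h + η * L_f) * ‖x0 - xhat‖ ^ 2 / ((K : ℝ) + 1) ^ 2 : ℝ) : EReal) := by
    refine h1.trans_eq ?_
    push_cast
    ring
  have h2 : hbar xK
      ≤ ((m + η * f xhat + 2 * (L_h + η * L_f) * ‖x0 - xhat‖ ^ 2 / ((K : ℝ) + 1) ^ 2
            - η * f xK : ℝ) : EReal) := by
    rw [EReal.coe_sub]
    rw [EReal.le_sub_iff_add_le (Or.inr (EReal.coe_ne_bot _)) (Or.inr (EReal.coe_ne_top _))]
    exact h1'
  refine h2.trans ?_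
  rw [← EReal.coe_add, EReal.coe_le_coe_iff, hd]
  have key : η * f xhat - η * f xK ≤ Df / ((K : ℝ) + 1) := by
    have := mul_le_mul_of_nonneg_left hDf hη0.le
    rw [hη] at this ⊢
    calc 1 / ((K:ℝ)+1) * f xhat - 1 / ((K:ℝ)+1) * f xK
        = 1 / ((K:ℝ)+1) * (f xhat - f xK) := by ring
      _ ≤ 1 / ((K:ℝ)+1) * Df := by
          apply mul_le_mul_of_nonneg_left hDf; positivity
      _ = Df / ((K:ℝ)+1) := by ring
  have heq : 2 * (L_h + η * L_f) * ‖x0 - xhat‖ ^ 2 / ((K : ℝ) + 1) ^ 2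
      = 2 * L_f * ‖x0 - xhat‖ ^ 2 / ((K : ℝ) + 1) ^ 3
        + 2 * L_h * ‖x0 - xhat‖ ^ 2 / ((K : ℝ) + 1) ^ 2 := by
    rw [hη]; field_simp; ring
  linarith
end

section
/- Fix an integer K ≥ 1 and nonnegative reals v_1, ..., v_K and u_1, ..., u_K with the FISTA sequence t_1 = 1, t_{k+1} = 1/2 + sqrt(1/4 + t_k²). Suppose for each 1 ≤ k ≤ K-1: (2/L)(t_k² v_k - t_{k+1}² v_{k+1}) ≥ u_{k+1}² - u_k², and suppose (2/L) t_1² v_1 + u_1² ≤ d² for some d, L > 0. Then v_K ≤ L d² / (2 t_K²) ≤ 2 L d² / (K+1)². -/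
/-- The telescoping argument converting the FISTA recursion into the `O(1/K²)`
rate: if `t` is the FISTA sequence, `v_k ≥ 0`, the recursion
`(2/L)(t_k² v_k - t_{k+1}² v_{k+1}) ≥ u_{k+1}² - u_k²` holds for
`1 ≤ k ≤ K-1`, and `(2/L) t_1² v_1 + u_1² ≤ d²`, then
`v_K ≤ L d²/(2 t_K²) ≤ 2 L d²/(K+1)²`. -/
theorem fista_telescoping (K : ℕ) (hK : 1 ≤ K) (L d : ℝ) (hL : 0 < L) (hd : 0 < d)
    (t : ℕ → ℝ) (ht1 : t 1 = 1)
    (htrec : ∀ k ≥ 1, t (k + 1) = 1 / 2 + Real.sqrt (1 / 4 + t k ^ 2))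
    (v u : ℕ → ℝ) (hv : ∀ k, 1 ≤ k → k ≤ K → 0 ≤ v k)
    (hrec : ∀ k, 1 ≤ k → k ≤ K - 1 →
      u (k + 1) ^ 2 - u k ^ 2 ≤ 2 / L * (t k ^ 2 * v k - t (k + 1) ^ 2 * v (k + 1)))
    (hinit : 2 / L * t 1 ^ 2 * v 1 + u 1 ^ 2 ≤ d ^ 2) :
    v K ≤ L * d ^ 2 / (2 * t K ^ 2)
      ∧ L * d ^ 2 / (2 * t K ^ 2) ≤ 2 * L * d ^ 2 / ((K : ℝ) + 1) ^ 2 := by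
  -- t k ≥ (k+1)/2 for k ≥ 1
  have hgrow : ∀ k : ℕ, 1 ≤ k → ((k : ℝ) + 1) / 2 ≤ t k := by
    intro k hk
    induction k with
    | zero => omega
    | succ n ih =>
      rcases Nat.eq_or_lt_of_le hk with h | h
      · simp [← h, ht1]
      · have hn : 1 ≤ n := by omega
        have ihn := ih hn
        have htn : 0 ≤ t n := le_trans (by positivity) ihn
        have := htrec n hn
        rw [this]
        have hs : t n ≤ Real.sqrt (1 / 4 + t n ^ 2) := by
          have h2 := Real.sqrt_le_sqrt (show t n ^ 2 ≤ 1 / 4 + t n ^ 2 by linarith)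
          rwa [Real.sqrt_sq htn] at h2
        push_cast
        nlinarith
  -- telescoping
  have htel : ∀ k, 1 ≤ k → k ≤ K → 2 / L * t k ^ 2 * v k + u k ^ 2 ≤ d ^ 2 := by
    intro k hk
    induction k with
    | zero => omega
    | succ n ih =>
      intro hle
      rcases Nat.eq_or_lt_of_le hk with h | h
      · rw [← h]; exact hinit
      · have hn : 1 ≤ n := by omega
        have ihn := ih hn (by omega)
        have hr := hrec n hn (by omega)
        nlinarith
  have hK1 := hgrow K hK
  have htK : ((K : ℝ) + 1) / 2 ≤ t K := hK1
  have hKpos : (0 : ℝ) < (K : ℝ) + 1 := by positivity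
  have htKpos : 0 < t K := lt_of_lt_of_le (by positivity) htK
  have hmain := htel K hK le_rfl
  constructor
  · rw [le_div_iff₀ (by positivity)]
    have h2 : 2 / L * t K ^ 2 * v K ≤ d ^ 2 := by nlinarith [sq_nonneg (u K)]
    have h3 : 2 * t K ^ 2 * v K ≤ L * d ^ 2 := by
      rw [div_mul_eq_mul_div, div_mul_eq_mul_div, div_le_iff₀ hL] at h2
      linarith
    nlinarith [h3]
  · have h4 : ((K : ℝ) + 1) ^ 2 ≤ 4 * t K ^ 2 := by nlinarith
    rw [div_le_div_iff₀ (by positivity) (by positivity)]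
    nlinarith [mul_le_mul_of_nonneg_left h4 (mul_pos hL (pow_pos hd 2)).le]
end
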